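/- arXiv:alg-geom/9608010 — 6 statements merged into one kernel-verified Lean document; each statement's English description precedes it below -/
import Mathlib

section
/- If f₁,…,f_s ∈ ℤ[X₁,…,Xₙ] are polynomials having no common zero in ℂⁿ, then there exist a nonzero integer a and polynomials g₁,…,g_s ∈ ℤ[X₁,…,Xₙ] such that a = g₁f₁ + ⋯ + g_sf_s holds in ℤ[X₁,…,Xₙ]. -/
/-!
Over `ℚ` the polynomials `f i` generate the unit ideal: otherwise, by Hilbert's
Nullstellensatz for the algebraically closed extension `ℂ` of `ℚ`, they would have a common
zero in `ℂⁿ`. Since `ℚ[X]` is the localization of `ℤ[X]` at the nonzero constants, the unit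
ideal of `ℚ[X]` is the extension of an ideal of `ℤ[X]` only if that ideal already contains a
nonzero constant `a`.
-/

open MvPolynomial

namespace MvPolynomial

theorem eq_top_of_zeroLocus_eq_empty {σ k K : Type*} [Field k] [Field K] [Algebra k K]
    [IsAlgClosed K] [Finite σ] {I : Ideal (MvPolynomial σ k)} (h : zeroLocus K I = ∅) :
    I = ⊤ := by
  rw [← Ideal.radical_eq_top, ← vanishingIdeal_zeroLocus_eq_radical (K := K), h,
    vanishingIdeal_empty]

theorem exists_C_mem_of_map_eq_top {σ R : Type*} (S : Type*) [CommRing R] [CommRing S]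
    [Algebra R S] (M : Submonoid R) [IsLocalization M S] {I : Ideal (MvPolynomial σ R)}
    (h : I.map (map (algebraMap R S)) = ⊤) : ∃ m ∈ M, C m ∈ I := by
  let := algebraMvPolynomial (σ := σ) (R := R) (S := S)
  have hdisj := (IsLocalization.map_algebraMap_ne_top_iff_disjoint
    (M.map (C (σ := σ))) (MvPolynomial σ S) I).not.mp (not_not.mpr h)
  obtain ⟨_, ⟨m, hm, rfl⟩, hmI⟩ := Set.not_disjoint_iff.mp hdisj
  exact ⟨m, hm, hmI⟩

end MvPolynomial

/-- Weak effective Nullstellensatz over ℤ.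
If `f₁, …, f_s ∈ ℤ[X₁,…,Xₙ]` have no common zero in `ℂⁿ`, then there exist a
nonzero integer `a` and polynomials `g₁, …, g_s ∈ ℤ[X₁,…,Xₙ]` with
`a = g₁ f₁ + ⋯ + g_s f_s`. -/
theorem statement_0 (n s : ℕ) (f : Fin s → MvPolynomial (Fin n) ℤ)
    (hnozero : ¬ ∃ x : Fin n → ℂ, ∀ i, MvPolynomial.aeval x (f i) = 0) :
    ∃ (a : ℤ) (g : Fin s → MvPolynomial (Fin n) ℤ),
      a ≠ 0 ∧ MvPolynomial.C a = ∑ i, g i * f i := by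
  set I := Ideal.span (Set.range f)
  have hzero : zeroLocus ℂ (I.map (map (algebraMap ℤ ℚ))) = ∅ := by
    simp only [I, Ideal.map_span, zeroLocus_span, ← Set.range_comp, Set.forall_mem_range,
      Function.comp_apply, aeval_map_algebraMap]
    exact Set.eq_empty_iff_forall_notMem.mpr fun x hx => hnozero ⟨x, hx⟩
  obtain ⟨a, ha, haI⟩ :=
    exists_C_mem_of_map_eq_top ℚ (nonZeroDivisors ℤ) (eq_top_of_zeroLocus_eq_empty hzero)
  obtain ⟨g, hg⟩ := Ideal.mem_span_range_iff_exists_fun.mp haI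
  exact ⟨a, g, nonZeroDivisors.ne_zero ha, hg.symm⟩
end

section
/- Let f₁,…,fₙ ∈ ℤ[X₁,…,Xₙ] and let α = (α₁,…,αₙ) ∈ ℂⁿ be a common zero of f₁,…,fₙ. Let q ≥ 1 be a natural number, let p₁,…,pₙ be Gaussian integers, and set a := (p₁/q,…,pₙ/q) ∈ ℂⁿ. Define f_{n+1} := (qX₁ − p₁)(qX₁ − p̄₁), a polynomial with integer coefficients (here p̄₁ is the complex conjugate of p₁). Suppose b is a nonzero integer and g₁,…,g_{n+1} ∈ ℤ[X₁,…,Xₙ] satisfy the Bézout identity b = g₁f₁ + ⋯ + g_{n+1}f_{n+1}. Then: (1) 1 ≤ |g_{n+1}(α)| · q² · ‖a − α‖ · (|α₁| + |p₁|/q); and (2) if moreover ‖a − α‖ < ε for some real ε with 0 < ε ≤ 1, then ε^{−1} ≤ |g_{n+1}(α)| · (2‖α‖ + 1) · q². -/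
/-- The norm on `ℂⁿ` associated with the standard hermitian inner product. -/
noncomputable def cnorm {n : ℕ} (x : Fin n → ℂ) : ℝ :=
  Real.sqrt (∑ k, ‖x k‖ ^ 2)

/-!
Evaluating the Bézout identity at the common zero `α` of `f₁, …, fₙ` gives
`b = g_{n+1}(α) · f_{n+1}(α)`, so `1 ≤ |g_{n+1}(α)| · |f_{n+1}(α)|` since `b` is a nonzero integer.
The first factor `q α₁ - p₁` of `f_{n+1}(α)` has modulus `q |a₁ - α₁| ≤ q ‖a - α‖`, and the second
is bounded by `q |α₁| + |p₁|`; this is (1). For (2), `|p₁| / q = |a₁| ≤ |α₁| + ‖a - α‖ ≤ ‖α‖ + 1`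
turns (1) into `1 ≤ |g_{n+1}(α)| (2‖α‖ + 1) q² ‖a - α‖ ≤ |g_{n+1}(α)| (2‖α‖ + 1) q² ε`.
-/

open MvPolynomial

lemma cnorm_eq_norm_toLp {n : ℕ} (x : Fin n → ℂ) :
    cnorm x = ‖(WithLp.toLp 2 x : EuclideanSpace ℂ (Fin n))‖ := by
  rw [EuclideanSpace.norm_eq, cnorm]

lemma norm_le_cnorm {n : ℕ} (x : Fin n → ℂ) (k : Fin n) : ‖x k‖ ≤ cnorm x := by
  rw [cnorm_eq_norm_toLp]
  exact PiLp.norm_apply_le (WithLp.toLp 2 x) k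

lemma cnorm_le_cnorm_add_cnorm_sub {n : ℕ} (x y : Fin n → ℂ) :
    cnorm x ≤ cnorm y + cnorm (x - y) := by
  simp only [cnorm_eq_norm_toLp, WithLp.toLp_sub]
  exact norm_le_norm_add_norm_sub' _ _

lemma one_le_norm_aeval_mul_of_eq_C {σ ι : Type*} [Fintype ι] {f g : ι → MvPolynomial σ ℤ}
    {h r : MvPolynomial σ ℤ} {b : ℤ} (hb : b ≠ 0) (hbez : C b = ∑ i, g i * f i + h * r)
    {α : σ → ℂ} (hα : ∀ i, aeval α (f i) = 0) :
    1 ≤ ‖aeval α h‖ * ‖aeval α r‖ := by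
  have hb_eval : (b : ℂ) = aeval α h * aeval α r := by
    simpa [hα, map_sum] using congrArg (aeval α) hbez
  rw [← norm_mul, ← hb_eval, Complex.norm_intCast]
  exact_mod_cast Int.one_le_abs hb

lemma norm_mul_sub_mul_sub_conj_le {q : ℝ} (hq : 0 < q) (z p : ℂ) :
    ‖(q * z - p) * (q * z - starRingEnd ℂ p)‖ ≤ q ^ 2 * ‖p / q - z‖ * (‖z‖ + ‖p‖ / q) := by
  have hqC : (q : ℂ) ≠ 0 := by exact_mod_cast hq.ne'
  have h_first : ‖(q : ℂ) * z - p‖ = q * ‖p / q - z‖ := by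
    calc ‖(q : ℂ) * z - p‖ = ‖(q : ℂ) * (p / q - z)‖ := by
          rw [← norm_neg]
          congr 1
          field_simp
          ring
      _ = q * ‖p / q - z‖ := by rw [norm_mul, Complex.norm_of_nonneg hq.le]
  have h_second : ‖(q : ℂ) * z - starRingEnd ℂ p‖ ≤ q * (‖z‖ + ‖p‖ / q) := by
    calc ‖(q : ℂ) * z - starRingEnd ℂ p‖ ≤ ‖(q : ℂ) * z‖ + ‖starRingEnd ℂ p‖ := norm_sub_le _ _
      _ = q * (‖z‖ + ‖p‖ / q) := by
        rw [norm_mul, Complex.norm_of_nonneg hq.le, Complex.norm_conj]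
        field_simp
  calc ‖(q * z - p) * (q * z - starRingEnd ℂ p)‖
      ≤ q * ‖p / q - z‖ * (q * (‖z‖ + ‖p‖ / q)) := by
        rw [norm_mul, h_first]
        gcongr
    _ = q ^ 2 * ‖p / q - z‖ * (‖z‖ + ‖p‖ / q) := by ring

theorem statement_2_general (n : ℕ) (hn : 0 < n)
    (f : Fin n → MvPolynomial (Fin n) ℤ) (α : Fin n → ℂ)
    (hα : ∀ i, MvPolynomial.aeval α (f i) = 0)
    (q : ℕ) (hq : 1 ≤ q) (p : Fin n → ℂ)
    (a : Fin n → ℂ) (ha : ∀ k, a k = p k / (q : ℂ))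
    (fn1 : MvPolynomial (Fin n) ℤ)
    (hfn1 : ∀ x : Fin n → ℂ,
      MvPolynomial.aeval x fn1 =
        ((q : ℂ) * x ⟨0, hn⟩ - p ⟨0, hn⟩) *
          ((q : ℂ) * x ⟨0, hn⟩ - starRingEnd ℂ (p ⟨0, hn⟩)))
    (b : ℤ) (hb : b ≠ 0) (g : Fin n → MvPolynomial (Fin n) ℤ)
    (gn1 : MvPolynomial (Fin n) ℤ)
    (hBezout : MvPolynomial.C b = ∑ i, g i * f i + gn1 * fn1) :
    (1 : ℝ) ≤ ‖MvPolynomial.aeval α gn1‖ * (q : ℝ) ^ 2 *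
        cnorm (a - α) * (‖α ⟨0, hn⟩‖ + ‖p ⟨0, hn⟩‖ / (q : ℝ)) ∧
    ∀ ε : ℝ, 0 < ε → ε ≤ 1 → cnorm (a - α) < ε →
      ε⁻¹ ≤ ‖MvPolynomial.aeval α gn1‖ * (2 * cnorm α + 1) * (q : ℝ) ^ 2 := by
  set i₀ : Fin n := ⟨0, hn⟩
  have hq₀ : (0 : ℝ) < q := by exact_mod_cast hq
  have hfn1_le : ‖aeval α fn1‖ ≤ q ^ 2 * cnorm (a - α) * (‖α i₀‖ + ‖p i₀‖ / q) := by
    calc ‖aeval α fn1‖ ≤ q ^ 2 * ‖p i₀ / q - α i₀‖ * (‖α i₀‖ + ‖p i₀‖ / q) := by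
          simpa [hfn1] using norm_mul_sub_mul_sub_conj_le hq₀ (α i₀) (p i₀)
      _ ≤ q ^ 2 * cnorm (a - α) * (‖α i₀‖ + ‖p i₀‖ / q) := by
          gcongr
          rw [← ha]
          exact norm_le_cnorm (a - α) i₀
  have part1 : (1 : ℝ) ≤ ‖aeval α gn1‖ * q ^ 2 * cnorm (a - α) * (‖α i₀‖ + ‖p i₀‖ / q) := by
    calc (1 : ℝ) ≤ ‖aeval α gn1‖ * ‖aeval α fn1‖ := one_le_norm_aeval_mul_of_eq_C hb hBezout hα
      _ ≤ ‖aeval α gn1‖ * (q ^ 2 * cnorm (a - α) * (‖α i₀‖ + ‖p i₀‖ / q)) := by gcongr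
      _ = _ := by ring
  refine ⟨part1, fun ε hε hε₁ hdist => ?_⟩
  have h_sum_le : ‖α i₀‖ + ‖p i₀‖ / q ≤ 2 * cnorm α + 1 := by
    have hpa : ‖p i₀‖ / q = ‖a i₀‖ := by rw [ha, norm_div, Complex.norm_natCast]
    linarith [norm_le_cnorm α i₀, norm_le_cnorm a i₀, cnorm_le_cnorm_add_cnorm_sub a α]
  rw [inv_le_iff_one_le_mul₀ hε]
  calc (1 : ℝ) ≤ ‖aeval α gn1‖ * q ^ 2 * cnorm (a - α) * (‖α i₀‖ + ‖p i₀‖ / q) := part1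
    _ ≤ ‖aeval α gn1‖ * q ^ 2 * ε * (2 * cnorm α + 1) := by gcongr
    _ = _ := by ring

/-- Key estimate for the Liouville bound.
Let `α ∈ ℂⁿ` be a common zero of `f₁, …, fₙ ∈ ℤ[X₁,…,Xₙ]`, let `q ≥ 1` be a
natural number, `p₁, …, pₙ` Gaussian integers, `a := (p₁/q, …, pₙ/q)`,
`f_{n+1} := (qX₁ − p₁)(qX₁ − p̄₁)`, and suppose `b ≠ 0` and
`b = g₁f₁ + ⋯ + g_{n+1}f_{n+1}` is a Bézout identity over `ℤ`.  Then
(1) `1 ≤ |g_{n+1}(α)|·q²·‖a − α‖·(|α₁| + |p₁|/q)`, and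
(2) if `‖a − α‖ < ε` with `0 < ε ≤ 1` then
`ε⁻¹ ≤ |g_{n+1}(α)|·(2‖α‖ + 1)·q²`. -/
theorem statement_2 (n : ℕ) (hn : 0 < n)
    (f : Fin n → MvPolynomial (Fin n) ℤ) (α : Fin n → ℂ)
    (hα : ∀ i, MvPolynomial.aeval α (f i) = 0)
    (q : ℕ) (hq : 1 ≤ q) (p : Fin n → ℂ)
    (hp : ∀ k, ∃ u v : ℤ, p k = (u : ℂ) + (v : ℂ) * Complex.I)
    (a : Fin n → ℂ) (ha : ∀ k, a k = p k / (q : ℂ))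
    (fn1 : MvPolynomial (Fin n) ℤ)
    (hfn1 : ∀ x : Fin n → ℂ,
      MvPolynomial.aeval x fn1 =
        ((q : ℂ) * x ⟨0, hn⟩ - p ⟨0, hn⟩) *
          ((q : ℂ) * x ⟨0, hn⟩ - starRingEnd ℂ (p ⟨0, hn⟩)))
    (b : ℤ) (hb : b ≠ 0) (g : Fin n → MvPolynomial (Fin n) ℤ)
    (gn1 : MvPolynomial (Fin n) ℤ)
    (hBezout : MvPolynomial.C b = ∑ i, g i * f i + gn1 * fn1) :
    (1 : ℝ) ≤ ‖MvPolynomial.aeval α gn1‖ * (q : ℝ) ^ 2 *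
        cnorm (a - α) * (‖α ⟨0, hn⟩‖ + ‖p ⟨0, hn⟩‖ / (q : ℝ)) ∧
    ∀ ε : ℝ, 0 < ε → ε ≤ 1 → cnorm (a - α) < ε →
      ε⁻¹ ≤ ‖MvPolynomial.aeval α gn1‖ * (2 * cnorm α + 1) * (q : ℝ) ^ 2 :=
  statement_2_general n hn f α hα q hq p a ha fn1 hfn1 b hb g gn1 hBezout
end

section
/- Let I be a radical ideal of ℚ[X₁,…,Xₙ] such that B := ℚ[X₁,…,Xₙ]/I is a finite-dimensional ℚ-vector space of dimension D ≥ 1. Let λ₁,…,λₙ be integers, set U := λ₁X₁ + ⋯ + λₙXₙ, let u be the image of U in B, and suppose the minimal polynomial m_u ∈ ℚ[T] of u over ℚ has degree D (i.e., u is a primitive element). Then for each 1 ≤ i ≤ n there exists a polynomial v_i ∈ ℚ[T] of degree strictly less than D such that X_i − v_i(U) ∈ I, and moreover I = (m_u(U), X₁ − v₁(U), …, Xₙ − vₙ(U)) as ideals of ℚ[X₁,…,Xₙ]. -/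
/-!
Since `deg m_u = dim B`, the powers `1, u, …, u^(D-1)` form a basis of `B`, so each `X_i` is
congruent modulo `I` to `v_i(U)` for a unique `v_i` of degree `< D`. Conversely, modulo the
`X_i - v_i(U)` every `f` is congruent to `f(v(U)) = q(U)` with `q = f(v)`; if `f ∈ I` then
`q(u) = 0`, so `m_u ∣ q` and `q(U)` is a multiple of `m_u(U)`.
-/

open MvPolynomial Polynomial

namespace MvPolynomial

theorem sub_aeval_mem_span_X_sub {σ R : Type*} [CommRing R] (g : σ → MvPolynomial σ R)
    (f : MvPolynomial σ R) :
    f - aeval g f ∈ Ideal.span (Set.range fun i => X i - g i) := by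
  set J := Ideal.span (Set.range fun i => X i - g i)
  have hX : ∀ i, Ideal.Quotient.mkₐ R J (X i) = Ideal.Quotient.mkₐ R J (g i) := fun i =>
    Ideal.Quotient.eq.mpr (Ideal.subset_span ⟨i, rfl⟩)
  have hcomp : (Ideal.Quotient.mkₐ R J).comp (aeval g) = Ideal.Quotient.mkₐ R J := by
    ext i
    simp [hX]
  exact Ideal.Quotient.eq.mp (AlgHom.congr_fun hcomp f).symm

end MvPolynomial

namespace Polynomial

section

variable {K R : Type*} [CommRing K] [CommRing R] [Algebra K R]

theorem mk_aeval (I : Ideal R) (x : R) (p : K[X]) :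
    Ideal.Quotient.mk I (aeval x p) = aeval (Ideal.Quotient.mk I x) p :=
  (aeval_algHom_apply (Ideal.Quotient.mkₐ K I) x p).symm

theorem aeval_mk_eq_zero_iff {I : Ideal R} {x : R} {p : K[X]} :
    aeval (Ideal.Quotient.mk I x) p = 0 ↔ aeval x p ∈ I := by
  rw [← mk_aeval, Ideal.Quotient.eq_zero_iff_mem]

end

theorem aeval_mem_span_aeval_minpoly {K R : Type*} [Field K] [CommRing R] [Algebra K R]
    {I : Ideal R} {x : R} {p : K[X]} (hp : aeval x p ∈ I) :
    aeval x p ∈ Ideal.span {aeval x (minpoly K (Ideal.Quotient.mk I x))} := by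
  obtain ⟨q, rfl⟩ := minpoly.dvd K _ (aeval_mk_eq_zero_iff.mpr hp)
  rw [map_mul]
  exact Ideal.mul_mem_right _ _ (Ideal.subset_span rfl)

end Polynomial

theorem MvPolynomial.ideal_eq_span_aeval_minpoly_union {ι K : Type*} [Field K]
    (I : Ideal (MvPolynomial ι K)) (U : MvPolynomial ι K) (v : ι → K[X])
    (hv : ∀ i, X i - Polynomial.aeval U (v i) ∈ I) :
    I = Ideal.span ({Polynomial.aeval U (minpoly K (Ideal.Quotient.mk I U))} ∪
      Set.range fun i => X i - Polynomial.aeval U (v i)) := by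
  refine le_antisymm (fun f hf => ?_) ?_
  · set g : ι → MvPolynomial ι K := fun i => Polynomial.aeval U (v i)
    have hf_sub : f - MvPolynomial.aeval g f ∈ Ideal.span (Set.range fun i => X i - g i) :=
      sub_aeval_mem_span_X_sub g f
    have hcomp : MvPolynomial.aeval g f = Polynomial.aeval U (MvPolynomial.aeval v f) := by
      rw [← MvPolynomial.comp_aeval_apply]
    have hgf : MvPolynomial.aeval g f ∈ I := by
      have hspan : Ideal.span (Set.range fun i => X i - g i) ≤ I := by
        rw [Ideal.span_le]
        rintro _ ⟨i, rfl⟩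
        exact hv i
      simpa using I.sub_mem hf (hspan hf_sub)
    rw [← sub_add_cancel f (MvPolynomial.aeval g f)]
    refine Ideal.add_mem _ (Ideal.span_mono Set.subset_union_right hf_sub)
      (Ideal.span_mono Set.subset_union_left ?_)
    rw [hcomp] at hgf ⊢
    exact aeval_mem_span_aeval_minpoly hgf
  · rw [Ideal.span_le]
    rintro _ (rfl | ⟨i, rfl⟩)
    · exact aeval_mk_eq_zero_iff.mp (minpoly.aeval K _)
    · exact hv i

noncomputable def PowerBasis.ofNatDegreeMinpolyEqFinrank {K A : Type*} [Field K] [Ring A]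
    [Algebra K A] [FiniteDimensional K A] (u : A)
    (h : (minpoly K u).natDegree = Module.finrank K A) : PowerBasis K A where
  gen := u
  dim := (minpoly K u).natDegree
  basis := basisOfLinearIndependentOfCardEqFinrank' _ (linearIndependent_pow u)
    (by rw [Fintype.card_fin, h])
  basis_eq_pow i := by simp

theorem statement_10_general (n D : ℕ) (hD : 1 ≤ D)
    (I : Ideal (MvPolynomial (Fin n) ℚ))
    (hdim : Module.finrank ℚ (MvPolynomial (Fin n) ℚ ⧸ I) = D)
    (lam : Fin n → ℤ)
    (hmin : (minpoly ℚ
        (Ideal.Quotient.mk I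
          (∑ i, MvPolynomial.C ((lam i : ℚ)) * MvPolynomial.X i))).natDegree = D) :
    ∃ v : Fin n → Polynomial ℚ,
      (∀ i, (v i).natDegree < D) ∧
      (∀ i, MvPolynomial.X i -
          Polynomial.aeval (∑ j, MvPolynomial.C ((lam j : ℚ)) * MvPolynomial.X j) (v i)
        ∈ I) ∧
      I = Ideal.span
        ({Polynomial.aeval (∑ j, MvPolynomial.C ((lam j : ℚ)) * MvPolynomial.X j)
            (minpoly ℚ
              (Ideal.Quotient.mk I
                (∑ i, MvPolynomial.C ((lam i : ℚ)) * MvPolynomial.X i)))} ∪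
          Set.range fun i =>
            MvPolynomial.X i -
              Polynomial.aeval (∑ j, MvPolynomial.C ((lam j : ℚ)) * MvPolynomial.X j)
                (v i)) := by
  set U : MvPolynomial (Fin n) ℚ := ∑ j, MvPolynomial.C ((lam j : ℚ)) * MvPolynomial.X j
  have hpos : 0 < Module.finrank ℚ (MvPolynomial (Fin n) ℚ ⧸ I) := by omega
  have := Module.nontrivial_of_finrank_pos hpos
  have := Module.finite_of_finrank_pos hpos
  let pb := PowerBasis.ofNatDegreeMinpolyEqFinrank (Ideal.Quotient.mk I U) (hmin.trans hdim.symm)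
  choose v hv_deg hv_eq using fun i => pb.exists_eq_aeval (Ideal.Quotient.mk I (X i))
  have hv : ∀ i, X i - Polynomial.aeval U (v i) ∈ I := fun i =>
    Ideal.Quotient.eq.mp ((hv_eq i).trans (mk_aeval I U (v i)).symm)
  exact ⟨v, fun i => hmin ▸ hv_deg i, hv, ideal_eq_span_aeval_minpoly_union I U v hv⟩

/-- Shape of a geometric solution.
Let `I` be a radical ideal of `ℚ[X₁,…,Xₙ]` with `B := ℚ[X₁,…,Xₙ]/I` of finite
ℚ-dimension `D ≥ 1`.  If the image `u` of an integral linear form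
`U = λ₁X₁ + ⋯ + λₙXₙ` in `B` has minimal polynomial `m_u` of degree `D`
(i.e. `u` is a primitive element), then there are `v₁, …, vₙ ∈ ℚ[T]` of
degree `< D` with `X_i − v_i(U) ∈ I` for all `i` and
`I = (m_u(U), X₁ − v₁(U), …, Xₙ − vₙ(U))`. -/
theorem statement_10 (n D : ℕ) (hD : 1 ≤ D)
    (I : Ideal (MvPolynomial (Fin n) ℚ)) (hrad : I.IsRadical)
    (hdim : Module.finrank ℚ (MvPolynomial (Fin n) ℚ ⧸ I) = D)
    (lam : Fin n → ℤ)
    (hmin : (minpoly ℚ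
        (Ideal.Quotient.mk I
          (∑ i, MvPolynomial.C ((lam i : ℚ)) * MvPolynomial.X i))).natDegree = D) :
    ∃ v : Fin n → Polynomial ℚ,
      (∀ i, (v i).natDegree < D) ∧
      (∀ i, MvPolynomial.X i -
          Polynomial.aeval (∑ j, MvPolynomial.C ((lam j : ℚ)) * MvPolynomial.X j) (v i)
        ∈ I) ∧
      I = Ideal.span
        ({Polynomial.aeval (∑ j, MvPolynomial.C ((lam j : ℚ)) * MvPolynomial.X j)
            (minpoly ℚ
              (Ideal.Quotient.mk I
                (∑ i, MvPolynomial.C ((lam i : ℚ)) * MvPolynomial.X i)))} ∪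
          Set.range fun i =>
            MvPolynomial.X i -
              Polynomial.aeval (∑ j, MvPolynomial.C ((lam j : ℚ)) * MvPolynomial.X j)
                (v i)) :=
  statement_10_general n D hD I hdim lam hmin
end

section
/- Let 1 ≤ r ≤ n and let f₁,…,f_{r−1} ∈ ℚ[Y₁,…,Yₙ]. Set R := ℚ[Y₁,…,Y_{n−r+1}], B := ℚ[Y₁,…,Yₙ]/(f₁,…,f_{r−1}), and assume the canonical ℚ-algebra homomorphism R → B is injective and makes B a free R-module of finite rank D ≥ 1. Let f_r ∈ ℚ[Y₁,…,Yₙ] and let M_{f_r} ∈ M_D(R) be the matrix, with respect to some R-module basis of B, of the R-linear map 'multiplication by the class of f_r' on B. Then the ideal (f₁,…,f_r) equals the unit ideal of ℚ[Y₁,…,Yₙ] if and only if det(M_{f_r}) is a nonzero constant, i.e., a nonzero element of ℚ (equivalently, a unit of R). -/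
set_option synthInstance.maxHeartbeats 400000

/-!
Modulo `(f₁,…,f_{r−1})`, the ideal `(f₁,…,f_r)` is the principal ideal generated by the class
`b` of `f_r` in `B`, so it is the unit ideal iff `b` is a unit of `B`. Since `B` is free over `R`,
multiplication by `b` is invertible iff its determinant `det M_{f_r}` is a unit of `R`, and the units
of a polynomial ring over a field are the nonzero constants.
-/

theorem Ideal.span_union_singleton_eq_top_iff {A : Type*} [CommRing A] (S : Set A) (g : A) :
    Ideal.span (S ∪ {g}) = ⊤ ↔ IsUnit (Ideal.Quotient.mk (Ideal.span S) g) := by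
  rw [← Ideal.span_singleton_eq_top, ← Set.image_singleton,
    ← Ideal.map_span (Ideal.Quotient.mk (Ideal.span S)),
    ← Ideal.comap_eq_top_iff (f := Ideal.Quotient.mk (Ideal.span S)),
    Ideal.comap_map_of_surjective' _ Ideal.Quotient.mk_surjective,
    Ideal.mk_ker, Ideal.span_union, sup_comm]

theorem Algebra.isUnit_det_leftMulMatrix_iff {R B ι : Type*} [CommRing R] [CommRing B]
    [Algebra R B] [Fintype ι] [DecidableEq ι] (b : Module.Basis ι R B) (x : B) :
    IsUnit (Algebra.leftMulMatrix b x).det ↔ IsUnit x := by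
  rw [← Matrix.isUnit_iff_isUnit_det, ← Algebra.toMatrix_lmul_eq, LinearMap.isUnit_toMatrix_iff]
  exact Algebra.lmul_isUnit_iff

theorem MvPolynomial.isUnit_iff_exists_ne_zero_eq_C {σ K : Type*} [Field K]
    {p : MvPolynomial σ K} : IsUnit p ↔ ∃ c : K, c ≠ 0 ∧ p = C c := by
  simp only [isUnit_iff_eq_C_of_isReduced, isUnit_iff_ne_zero]

/-- Consistency test via the homothety matrix.
Let `1 ≤ r ≤ n`, `f₁, …, f_{r−1} ∈ ℚ[Y₁,…,Yₙ]`, `R := ℚ[Y₁,…,Y_{n−r+1}]` and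
`B := ℚ[Y₁,…,Yₙ]/(f₁,…,f_{r−1})`.  Assume the canonical ℚ-algebra map
`φ : R → B` is injective and makes `B` a free `R`-module of finite rank
`D ≥ 1`.  For `f_r ∈ ℚ[Y₁,…,Yₙ]`, let `M_{f_r}` be the matrix (with respect
to an `R`-basis of `B`) of multiplication by the class of `f_r`.  Then
`(f₁,…,f_r) = (1)` if and only if `det M_{f_r}` is a nonzero constant of `ℚ`
(equivalently, a unit of `R`). -/
theorem statement_11 (n r D : ℕ)
    (f : Fin (r - 1) → MvPolynomial (Fin n) ℚ) (fr : MvPolynomial (Fin n) ℚ)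
    (φ : MvPolynomial (Fin (n - r + 1)) ℚ →+*
      MvPolynomial (Fin n) ℚ ⧸ Ideal.span (Set.range f)) :
    letI : Algebra (MvPolynomial (Fin (n - r + 1)) ℚ)
        (MvPolynomial (Fin n) ℚ ⧸ Ideal.span (Set.range f)) := φ.toAlgebra
    ∀ _bas : Module.Basis (Fin D) (MvPolynomial (Fin (n - r + 1)) ℚ)
        (MvPolynomial (Fin n) ℚ ⧸ Ideal.span (Set.range f)),
      (Ideal.span (Set.range f ∪ {fr}) = ⊤ ↔
        ∃ c : ℚ, c ≠ 0 ∧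
          (Algebra.leftMulMatrix _bas
            (Ideal.Quotient.mk (Ideal.span (Set.range f)) fr)).det =
            MvPolynomial.C c) := by
  let _ := φ.toAlgebra
  intro bas
  rw [Ideal.span_union_singleton_eq_top_iff, ← Algebra.isUnit_det_leftMulMatrix_iff bas,
    MvPolynomial.isUnit_iff_exists_ne_zero_eq_C]
end

section
/- Let R be a commutative ring and f₁,…,fₙ ∈ R[X₁,…,Xₙ]. For 1 ≤ j ≤ n write f_j^Y := f_j(Y₁,…,Yₙ) ∈ R[X₁,…,Xₙ,Y₁,…,Yₙ]. Suppose (l_{kj}) and (l'_{kj}) are two n×n matrices with entries in R[X₁,…,Xₙ,Y₁,…,Yₙ] such that for every j, f_j^Y − f_j = Σ_{k=1}^n l_{kj}·(Y_k − X_k) = Σ_{k=1}^n l'_{kj}·(Y_k − X_k). Then det(l_{kj}) − det(l'_{kj}) belongs to the ideal of R[X₁,…,Xₙ,Y₁,…,Yₙ] generated by f₁,…,fₙ, f₁^Y,…,fₙ^Y. In other words, the pseudo-jacobian determinant Δ := det(l_{kj}) is well defined modulo (f₁,…,fₙ, f₁^Y,…,fₙ^Y). -/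
/-!
Put `d k = Y_k - X_k` and let `I` be the ideal. Both matrices satisfy `d ᵥ* L ≡ 0 (mod I)`, and
each column of `L - L'` is a syzygy of `d`. Since `d` becomes the sequence of variables
`X_1, …, X_n` after a change of coordinates, its first Koszul homology vanishes, so every such
column has the form `(a - aᵀ) *ᵥ d`. Replace the columns of `L` by those of `L'` one at a time:
by Cramer's rule the determinant changes by `u ⬝ᵥ (a - aᵀ) *ᵥ d`, where `u` is a row of the
adjugate, and modulo `I` that row is proportional to `d`, so the alternating form vanishes.
-/

open MvPolynomial Matrix

section Koszul

variable {A A' : Type*} [CommRing A] [CommRing A'] {ι : Type*} [Fintype ι]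

theorem Matrix.comp_sub_transpose_mulVec (f : A →+* A') (a : Matrix ι ι A) (d : ι → A) :
    f ∘ ((a - aᵀ) *ᵥ d) = (a.map f - (a.map f)ᵀ) *ᵥ (f ∘ d) := by
  funext k
  rw [Function.comp_apply, RingHom.map_mulVec, Matrix.map_sub _ (map_sub f), transpose_map]

theorem Matrix.dotProduct_sub_transpose_mulVec_self (a : Matrix ι ι A) (d : ι → A) :
    d ⬝ᵥ (a - aᵀ) *ᵥ d = 0 := by
  rw [sub_mulVec, dotProduct_sub, dotProduct_mulVec d aᵀ, vecMul_transpose,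
    dotProduct_comm (a *ᵥ d), sub_self]

/-- Every syzygy of `d` is a Koszul boundary, i.e. the first Koszul homology of `d` vanishes. -/
def HasKoszulSyzygies (d : ι → A) : Prop :=
  ∀ c : ι → A, d ⬝ᵥ c = 0 → ∃ a : Matrix ι ι A, c = (a - aᵀ) *ᵥ d

theorem HasKoszulSyzygies.map {d : ι → A} (h : HasKoszulSyzygies d) (e : A ≃+* A') :
    HasKoszulSyzygies (e ∘ d) := by
  intro c hc
  obtain ⟨a, ha⟩ := h (e.symm ∘ c) (by
    have := congrArg e.symm hc
    rw [map_zero, ← RingEquiv.coe_toRingHom, RingHom.map_dotProduct] at this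
    simpa [Function.comp_def] using this)
  refine ⟨a.map e, ?_⟩
  rw [← RingEquiv.coe_toRingHom, ← comp_sub_transpose_mulVec, ← ha]
  funext k
  simp

theorem HasKoszulSyzygies.cons_X {n : ℕ} {d : Fin n → A} (h : HasKoszulSyzygies d) :
    HasKoszulSyzygies (Fin.cons Polynomial.X (Polynomial.C ∘ d) : Fin (n + 1) → Polynomial A) := by
  intro c hc
  have hrel : Polynomial.X * c 0 + ∑ m, Polynomial.C (d m) * c m.succ = 0 := by
    simpa [dotProduct, Fin.sum_univ_succ] using hc
  set e : Fin n → A := fun m => (c m.succ).coeff 0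
  have hsplit (m : Fin n) : c m.succ = (c m.succ).divX * Polynomial.X + Polynomial.C (e m) :=
    (Polynomial.divX_mul_X_add _).symm
  have he : d ⬝ᵥ e = 0 := by
    simpa [Polynomial.finsetSum_coeff, Polynomial.coeff_C_mul, dotProduct] using
      congrArg (Polynomial.coeff · 0) hrel
  obtain ⟨a, ha⟩ := h e he
  have hexpand : ∑ m, Polynomial.C (d m) * c m.succ =
      Polynomial.X * ∑ m, Polynomial.C (d m) * (c m.succ).divX + Polynomial.C (d ⬝ᵥ e) := by
    simp only [Finset.mul_sum, dotProduct, map_sum, map_mul, ← Finset.sum_add_distrib]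
    exact Finset.sum_congr rfl fun m _ => by linear_combination Polynomial.C (d m) * hsplit m
  have hc0 : c 0 = -∑ m, Polynomial.C (d m) * (c m.succ).divX := by
    refine eq_neg_of_add_eq_zero_left (Polynomial.isRegular_X.left ?_)
    rw [hexpand, he, map_zero, add_zero] at hrel
    simp only [mul_zero]
    linear_combination hrel
  refine ⟨of (Fin.cons 0 fun m => Fin.cons (c m.succ).divX fun q => Polynomial.C (a m q)), ?_⟩
  funext i
  induction i using Fin.cases with
  | zero => simp [hc0, mulVec, dotProduct, Fin.sum_univ_succ, mul_comm]
  | succ m =>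
    have hem := congrArg Polynomial.C (congrFun ha m)
    simp [mulVec, dotProduct] at hem
    simpa [mulVec, dotProduct, Fin.sum_univ_succ, ← hem] using hsplit m

theorem MvPolynomial.hasKoszulSyzygies_X (n : ℕ) :
    HasKoszulSyzygies (X : Fin n → MvPolynomial (Fin n) A) := by
  induction n with
  | zero => exact fun c _ => ⟨0, Subsingleton.elim _ _⟩
  | succ n ih =>
    convert ih.cons_X.map (finSuccEquiv A n).symm.toRingEquiv using 1
    funext i
    induction i using Fin.cases <;>
      simp [AlgEquiv.eq_symm_apply, finSuccEquiv_X_zero, finSuccEquiv_X_succ]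

theorem MvPolynomial.hasKoszulSyzygies_X_inr_sub_X_inl (n : ℕ) :
    HasKoszulSyzygies fun k : Fin n => (X (.inr k) - X (.inl k) : MvPolynomial (Fin n ⊕ Fin n) A) := by
  let σ : MvPolynomial (Fin n ⊕ Fin n) A →ₐ[A] MvPolynomial (Fin n ⊕ Fin n) A :=
    aeval (Sum.elim (fun k => X (.inr k) - X (.inl k)) (fun k => X (.inr k)))
  have hσ : σ.comp σ = AlgHom.id A _ := by ext (i | i) <;> simp [σ]
  convert ((hasKoszulSyzygies_X n).map (sumAlgEquiv A (Fin n) (Fin n)).symm.toRingEquiv).map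
    (AlgEquiv.ofAlgHom σ σ hσ hσ).toRingEquiv using 1
  funext k
  simp [σ, sumAlgEquiv_symm_X]

end Koszul

namespace Matrix

variable {B : Type*} [CommRing B] {ι : Type*} [Fintype ι] [DecidableEq ι]

theorem adjugate_apply_eq_det_updateCol (M : Matrix ι ι B) (i j : ι) :
    adjugate M i j = (M.updateCol i (Pi.single j 1)).det := by
  rw [← cramer_apply, cramer_eq_adjugate_mulVec, mulVec_single_one, col_apply]

theorem adjugate_updateCol_apply_self (M : Matrix ι ι B) (i : ι) (v : ι → B) (j : ι) :
    adjugate (M.updateCol i v) i j = adjugate M i j := by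
  simp only [adjugate_apply_eq_det_updateCol, updateCol_idem]

theorem adjugate_mul_comm_of_vecMul_eq_zero {M : Matrix ι ι B} {d : ι → B} {i : ι}
    (hM : ∀ j ≠ i, (d ᵥ* M) j = 0) (p q : ι) :
    adjugate M i p * d q = adjugate M i q * d p := by
  set N := M.updateCol i (Pi.single p 1)
  have hN : d ᵥ* N = Pi.single i (d p) := by
    funext j
    by_cases hj : j = i
    · subst hj; simp [N, vecMul]
    · rw [Pi.single_eq_of_ne hj, ← hM j hj]
      simp [N, vecMul, hj]
  have key : N.det • d = Pi.single i (d p) ᵥ* adjugate N := by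
    rw [← hN, vecMul_vecMul, mul_adjugate, vecMul_smul, vecMul_one]
  have := congrFun key q
  simp only [Pi.smul_apply, smul_eq_mul, single_vecMul, row_apply] at this
  rw [adjugate_apply_eq_det_updateCol, ← adjugate_updateCol_apply_self M i (Pi.single p 1), this]
  ring

theorem det_updateCol_add_koszul {M : Matrix ι ι B} {d : ι → B} {i : ι}
    (hM : ∀ j ≠ i, (d ᵥ* M) j = 0) (v : ι → B) (a : Matrix ι ι B) :
    (M.updateCol i (v + (a - aᵀ) *ᵥ d)).det = (M.updateCol i v).det := by
  rw [det_updateCol_add, add_eq_left, ← cramer_apply, cramer_eq_adjugate_mulVec]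
  calc (adjugate M *ᵥ ((a - aᵀ) *ᵥ d)) i
      = ∑ m, ∑ q, a m q * (adjugate M i m * d q) - ∑ m, ∑ q, a q m * (adjugate M i m * d q) := by
        simp only [mulVec, dotProduct, Matrix.sub_apply, transpose_apply, Finset.mul_sum,
          ← Finset.sum_sub_distrib]
        exact Finset.sum_congr rfl fun m _ => Finset.sum_congr rfl fun q _ => by ring
    _ = ∑ m, ∑ q, a m q * (adjugate M i m * d q) - ∑ m, ∑ q, a m q * (adjugate M i q * d m) := by
        rw [Finset.sum_comm (f := fun m q => a q m * _)]
    _ = 0 := by simp only [adjugate_mul_comm_of_vecMul_eq_zero hM, sub_self]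


theorem det_eq_of_col_eq_add_koszul {M N : Matrix ι ι B} {d : ι → B} (hM : d ᵥ* M = 0)
    (hN : ∀ j, ∃ a : Matrix ι ι B, N.col j = M.col j + (a - aᵀ) *ᵥ d) : N.det = M.det := by
  choose a ha using hN
  let P (s : Finset ι) : Matrix ι ι B := of fun k j => if j ∈ s then N k j else M k j
  have hP (s : Finset ι) : d ᵥ* P s = 0 := by
    funext j
    by_cases hj : j ∈ s
    · have : (d ᵥ* P s) j = d ⬝ᵥ N.col j :=
        congrArg (d ⬝ᵥ ·) (funext fun k => by simp [P, hj])
      rw [this, ha, dotProduct_add, dotProduct_sub_transpose_mulVec_self, add_zero]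
      exact congrFun hM j
    · have : (d ᵥ* P s) j = d ⬝ᵥ M.col j :=
        congrArg (d ⬝ᵥ ·) (funext fun k => by simp [P, hj])
      rw [this]
      exact congrFun hM j
  have hstep (s : Finset ι) (i : ι) (hi : i ∉ s) : (P (insert i s)).det = (P s).det := by
    have hNi : P (insert i s) = (P s).updateCol i (M.col i + (a i - (a i)ᵀ) *ᵥ d) := by
      ext k j
      by_cases hj : j = i
      · subst hj; simp [P, ← ha]
      · simp [P, hj]
    have hMi : P s = (P s).updateCol i (M.col i) := by
      ext k j
      by_cases hj : j = i
      · subst hj; simp [P, hi]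
      · simp [P, hj]
    rw [hNi, det_updateCol_add_koszul fun j _ => congrFun (hP s) j, ← hMi]
  have hdet (s : Finset ι) : (P s).det = (P ∅).det := by
    induction s using Finset.induction_on with
    | empty => rfl
    | insert i s hi ih => rw [hstep s i hi, ih]
  convert hdet Finset.univ using 2 <;> ext <;> simp [P]

theorem det_sub_det_mem_of_vecMul_eq {A : Type*} [CommRing A] (I : Ideal A) {d : ι → A}
    (hd : HasKoszulSyzygies d) {L L' : Matrix ι ι A} (hL : ∀ j, (d ᵥ* L) j ∈ I)
    (hLL' : d ᵥ* L = d ᵥ* L') : L.det - L'.det ∈ I := by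
  rw [← Ideal.Quotient.mk_eq_mk_iff_sub_mem, RingHom.map_det, RingHom.map_det,
    RingHom.mapMatrix_apply, RingHom.mapMatrix_apply]
  set π := Ideal.Quotient.mk I
  refine (det_eq_of_col_eq_add_koszul (d := π ∘ d) ?_ fun j => ?_).symm
  · funext j
    rw [← RingHom.map_vecMul, Pi.zero_apply, Ideal.Quotient.eq_zero_iff_mem]
    exact hL j
  · obtain ⟨a, ha⟩ := hd (L'.col j - L.col j) (by
      rw [dotProduct_sub, sub_eq_zero]
      exact (congrFun hLL' j).symm)
    refine ⟨a.map π, ?_⟩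
    rw [← comp_sub_transpose_mulVec, ← ha]
    funext k
    simp

end Matrix

/-- The pseudo-jacobian determinant is well defined.
Let `R` be a commutative ring, `f₁, …, fₙ ∈ R[X₁,…,Xₙ]`, and for each `j` let
`f_j^Y` be obtained from `f_j` by substituting `Y`'s for `X`'s in the
polynomial ring `R[X₁,…,Xₙ,Y₁,…,Yₙ]` (variables indexed by `Fin n ⊕ Fin n`,
with `X` the left and `Y` the right copy).  If `(l_{kj})` and `(l'_{kj})`
both satisfy `f_j^Y − f_j = Σ_k l_{kj}(Y_k − X_k)`, then
`det(l_{kj}) − det(l'_{kj})` lies in the ideal generated by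
`f₁, …, fₙ, f₁^Y, …, fₙ^Y`. -/
theorem statement_12 (R : Type*) [CommRing R] (n : ℕ)
    (f : Fin n → MvPolynomial (Fin n) R)
    (l l' : Fin n → Fin n → MvPolynomial (Fin n ⊕ Fin n) R)
    (hl : ∀ j, MvPolynomial.rename Sum.inr (f j) - MvPolynomial.rename Sum.inl (f j) =
      ∑ k, l k j * (MvPolynomial.X (Sum.inr k) - MvPolynomial.X (Sum.inl k)))
    (hl' : ∀ j, MvPolynomial.rename Sum.inr (f j) - MvPolynomial.rename Sum.inl (f j) =
      ∑ k, l' k j * (MvPolynomial.X (Sum.inr k) - MvPolynomial.X (Sum.inl k))) :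
    Matrix.det (Matrix.of fun k j => l k j) - Matrix.det (Matrix.of fun k j => l' k j) ∈
      Ideal.span (Set.range (fun j => MvPolynomial.rename Sum.inl (f j)) ∪
        Set.range (fun j => MvPolynomial.rename Sum.inr (f j))) := by
  set d : Fin n → MvPolynomial (Fin n ⊕ Fin n) R := fun k => X (.inr k) - X (.inl k)
  have hvec : d ᵥ* of l = fun j => rename Sum.inr (f j) - rename Sum.inl (f j) := by
    funext j; simp [vecMul, dotProduct, hl, d, mul_comm]
  have hvec' : d ᵥ* of l' = fun j => rename Sum.inr (f j) - rename Sum.inl (f j) := by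
    funext j; simp [vecMul, dotProduct, hl', d, mul_comm]
  refine det_sub_det_mem_of_vecMul_eq _ (hasKoszulSyzygies_X_inr_sub_X_inl n) (fun j => ?_)
    (hvec.trans hvec'.symm)
  rw [hvec]
  exact Ideal.sub_mem _ (Ideal.subset_span (.inr ⟨j, rfl⟩)) (Ideal.subset_span (.inl ⟨j, rfl⟩))
end

section
/- Let R := ℚ[Z₁,…,Z_r] be a polynomial ring with field of fractions K := ℚ(Z₁,…,Z_r), let B be a commutative R-algebra that is free of rank D ≥ 1 as an R-module, let P = (p₁,…,p_r) ∈ ℚ^r, and let m_P := (Z₁ − p₁,…,Z_r − p_r) be the corresponding maximal ideal of R. Let u ∈ B. If the images of 1, u, u², …, u^{D−1} in the ℚ-algebra B/m_P·B are linearly independent over ℚ, then the images of 1, u, u², …, u^{D−1} in K ⊗_R B form a K-vector space basis of K ⊗_R B. In particular, u is then a primitive element of the ring extension R → B, i.e., the minimal polynomial of u over K has degree D = rank_R B. -/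
open TensorProduct

/-! Let `M` be the coordinate matrix of `1, u, …, u^{D-1}` in the given `R`-basis of `B`.
Evaluated at `P`, it is their coordinate matrix in the fibre `B / m_P B`, so independence in the
fibre gives `(det M)(P) ≠ 0`. Hence `det M ≠ 0`, and over the fraction field the powers of
`1 ⊗ u` form a basis, that is, a power basis of `K ⊗_R B`. -/

namespace MvPolynomial

variable {σ k : Type*} [CommRing k]

theorem sub_C_eval_mem_span_X_sub_C (P : σ → k) (g : MvPolynomial σ k) :
    g - C (eval P g) ∈ Ideal.span (Set.range fun i => X i - C (P i)) := by
  induction g using MvPolynomial.induction_on with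
  | C a => simp
  | add p q hp hq =>
    rw [map_add, map_add, add_sub_add_comm]
    exact Ideal.add_mem _ hp hq
  | mul_X p i hp =>
    have hsplit : p * X i - C (eval P (p * X i)) =
        p * (X i - C (P i)) + (p - C (eval P p)) * C (P i) := by
      rw [map_mul, eval_X, map_mul]; ring
    rw [hsplit]
    exact Ideal.add_mem _ (Ideal.mul_mem_left _ _ (Ideal.subset_span ⟨i, rfl⟩))
      (Ideal.mul_mem_right _ _ hp)

theorem mem_span_X_sub_C_of_eval_eq_zero (P : σ → k) {g : MvPolynomial σ k}
    (h : eval P g = 0) : g ∈ Ideal.span (Set.range fun i => X i - C (P i)) := by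
  simpa [h] using sub_C_eval_mem_span_X_sub_C P g

end MvPolynomial

section FreeModule

variable {ι R B : Type*} [Fintype ι] [CommRing R] [CommRing B] [Algebra R B]

theorem Module.Basis.mem_map_algebraMap_of_repr_mem {I : Ideal R} (b : Basis ι R B) {x : B}
    (h : ∀ i, b.repr x i ∈ I) : x ∈ I.map (algebraMap R B) := by
  rw [← b.sum_repr x]
  refine Ideal.sum_mem _ fun i _ => ?_
  rw [Algebra.smul_def]
  exact Ideal.mul_mem_right _ _ (Ideal.mem_map_of_mem _ (h i))

theorem Module.Basis.apply_det_toMatrix_ne_zero {k : Type*} [Field k] [Algebra k R] [Algebra k B]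
    [IsScalarTower k R B] [DecidableEq ι] (b : Basis ι R B) (φ : R →ₐ[k] k) {I : Ideal R}
    (hker : ∀ g, φ g = 0 → g ∈ I) {v : ι → B}
    (hindep : LinearIndependent k fun i => Ideal.Quotient.mk (I.map (algebraMap R B)) (v i)) :
    φ (b.toMatrix v).det ≠ 0 := by
  intro hdet
  rw [← AlgHom.coe_toRingHom, RingHom.map_det] at hdet
  obtain ⟨c, hc, hmul⟩ := Matrix.exists_mulVec_eq_zero_iff.mpr hdet
  have hrel : ∑ j, c j • v j ∈ I.map (algebraMap R B) := by
    refine b.mem_map_algebraMap_of_repr_mem fun i => hker _ ?_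
    calc φ (b.repr (∑ j, c j • v j) i)
        = ((φ : R →+* k).mapMatrix (b.toMatrix v)).mulVec c i := by
          simp only [← algebraMap_smul R (c _) (v _), map_sum, map_smul, Finsupp.coe_finsetSum,
            Finset.sum_apply, Finsupp.smul_apply, smul_eq_mul, map_mul, AlgHom.commutes,
            Algebra.algebraMap_self, RingHom.id_apply, Matrix.mulVec, dotProduct,
            RingHom.mapMatrix_apply, Matrix.map_apply, Module.Basis.toMatrix_apply,
            AlgHom.coe_toRingHom, mul_comm]
      _ = 0 := congrFun hmul i
  refine hc (Fintype.linearIndependent_iff.mp hindep c ?_ |> funext)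
  rw [← Ideal.Quotient.eq_zero_iff_mem, ← Ideal.Quotient.mkₐ_eq_mk k, map_sum] at hrel
  simpa only [map_smul, Ideal.Quotient.mkₐ_eq_mk] using hrel

theorem Module.Basis.linearIndependent_tmul_and_span_eq_top_of_det_ne_zero {K : Type*} [Field K]
    [Algebra R K] (hK : Function.Injective (algebraMap R K)) [DecidableEq ι] (b : Basis ι R B)
    {v : ι → B} (hdet : (b.toMatrix v).det ≠ 0) :
    LinearIndependent K (fun i => (1 : K) ⊗ₜ[R] v i) ∧
      Submodule.span K (Set.range fun i => (1 : K) ⊗ₜ[R] v i) = ⊤ := by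
  have htoMatrix : (b.baseChange K).toMatrix (fun i => (1 : K) ⊗ₜ[R] v i) =
      (b.toMatrix v).map (algebraMap R K) := by
    ext i j
    simp [Module.Basis.toMatrix_apply, Module.Basis.baseChange_repr_tmul, Algebra.smul_def]
  rw [Module.Basis.is_basis_iff_det (b.baseChange K), Module.Basis.det_apply, htoMatrix,
    ← RingHom.mapMatrix_apply, ← RingHom.map_det, isUnit_iff_ne_zero]
  exact (map_ne_zero_iff _ hK).mpr hdet

end FreeModule

theorem minpoly.natDegree_eq_of_linearIndependent_pow {K A : Type*} [CommRing K] [Nontrivial K]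
    [Ring A] [Algebra K A] {x : A} {D : ℕ}
    (hli : LinearIndependent K fun k : Fin D => x ^ (k : ℕ))
    (hspan : Submodule.span K (Set.range fun k : Fin D => x ^ (k : ℕ)) = ⊤) :
    (minpoly K x).natDegree = D :=
  PowerBasis.natDegree_minpoly
    { gen := x, dim := D, basis := Module.Basis.mk hli hspan.ge
      basis_eq_pow := Module.Basis.mk_apply hli hspan.ge }

theorem statement_14_general (r D : ℕ)
    (B : Type) [CommRing B]
    [Algebra (MvPolynomial (Fin r) ℚ) B] [Algebra ℚ B]
    [IsScalarTower ℚ (MvPolynomial (Fin r) ℚ) B]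
    (bas : Module.Basis (Fin D) (MvPolynomial (Fin r) ℚ) B)
    (P : Fin r → ℚ) (u : B)
    (hindep : LinearIndependent ℚ fun k : Fin D =>
      Ideal.Quotient.mk
        (Ideal.map (algebraMap (MvPolynomial (Fin r) ℚ) B)
          (Ideal.span (Set.range fun i => MvPolynomial.X i - MvPolynomial.C (P i))))
        (u ^ (k : ℕ))) :
    LinearIndependent (FractionRing (MvPolynomial (Fin r) ℚ))
      (fun k : Fin D =>
        ((1 : FractionRing (MvPolynomial (Fin r) ℚ))
          ⊗ₜ[MvPolynomial (Fin r) ℚ] (u ^ (k : ℕ)) :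
          FractionRing (MvPolynomial (Fin r) ℚ) ⊗[MvPolynomial (Fin r) ℚ] B)) ∧
    Submodule.span (FractionRing (MvPolynomial (Fin r) ℚ))
      (Set.range fun k : Fin D =>
        ((1 : FractionRing (MvPolynomial (Fin r) ℚ))
          ⊗ₜ[MvPolynomial (Fin r) ℚ] (u ^ (k : ℕ)) :
          FractionRing (MvPolynomial (Fin r) ℚ) ⊗[MvPolynomial (Fin r) ℚ] B)) = ⊤ ∧
    (minpoly (FractionRing (MvPolynomial (Fin r) ℚ))
      ((1 : FractionRing (MvPolynomial (Fin r) ℚ))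
        ⊗ₜ[MvPolynomial (Fin r) ℚ] u :
        FractionRing (MvPolynomial (Fin r) ℚ) ⊗[MvPolynomial (Fin r) ℚ] B)).natDegree
      = D := by
  have hdet := bas.apply_det_toMatrix_ne_zero (MvPolynomial.aeval P)
    (fun _ => MvPolynomial.mem_span_X_sub_C_of_eval_eq_zero P) hindep
  obtain ⟨hli, hspan⟩ := bas.linearIndependent_tmul_and_span_eq_top_of_det_ne_zero
    (IsFractionRing.injective _ (FractionRing (MvPolynomial (Fin r) ℚ)))
    (ne_zero_of_map hdet)
  refine ⟨hli, hspan, minpoly.natDegree_eq_of_linearIndependent_pow ?_ ?_⟩ <;>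
    simpa only [Algebra.TensorProduct.tmul_pow, one_pow]

/-- A primitive element of a lifting fiber is a primitive
element of the extension.  Let `R := ℚ[Z₁,…,Z_r]` with fraction field `K`,
let `B` be an `R`-algebra free of rank `D ≥ 1` as `R`-module, let
`P ∈ ℚ^r` with maximal ideal `m_P = (Z₁−p₁,…,Z_r−p_r)`, and let `u ∈ B`.
If the images of `1, u, …, u^{D−1}` in `B/m_P·B` are ℚ-linearly independent,
then `1 ⊗ u^0, …, 1 ⊗ u^{D−1}` form a `K`-basis of `K ⊗_R B`; in particular
the minimal polynomial of `u` over `K` has degree `D = rank_R B`. -/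
theorem statement_14 (r D : ℕ) (hD : 1 ≤ D)
    (B : Type) [CommRing B]
    [Algebra (MvPolynomial (Fin r) ℚ) B] [Algebra ℚ B]
    [IsScalarTower ℚ (MvPolynomial (Fin r) ℚ) B]
    (bas : Module.Basis (Fin D) (MvPolynomial (Fin r) ℚ) B)
    (P : Fin r → ℚ) (u : B)
    (hindep : LinearIndependent ℚ fun k : Fin D =>
      Ideal.Quotient.mk
        (Ideal.map (algebraMap (MvPolynomial (Fin r) ℚ) B)
          (Ideal.span (Set.range fun i => MvPolynomial.X i - MvPolynomial.C (P i))))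
        (u ^ (k : ℕ))) :
    LinearIndependent (FractionRing (MvPolynomial (Fin r) ℚ))
      (fun k : Fin D =>
        ((1 : FractionRing (MvPolynomial (Fin r) ℚ))
          ⊗ₜ[MvPolynomial (Fin r) ℚ] (u ^ (k : ℕ)) :
          FractionRing (MvPolynomial (Fin r) ℚ) ⊗[MvPolynomial (Fin r) ℚ] B)) ∧
    Submodule.span (FractionRing (MvPolynomial (Fin r) ℚ))
      (Set.range fun k : Fin D =>
        ((1 : FractionRing (MvPolynomial (Fin r) ℚ))
          ⊗ₜ[MvPolynomial (Fin r) ℚ] (u ^ (k : ℕ)) :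
          FractionRing (MvPolynomial (Fin r) ℚ) ⊗[MvPolynomial (Fin r) ℚ] B)) = ⊤ ∧
    (minpoly (FractionRing (MvPolynomial (Fin r) ℚ))
      ((1 : FractionRing (MvPolynomial (Fin r) ℚ))
        ⊗ₜ[MvPolynomial (Fin r) ℚ] u :
        FractionRing (MvPolynomial (Fin r) ℚ) ⊗[MvPolynomial (Fin r) ℚ] B)).natDegree
      = D :=
  statement_14_general r D B bas P u hindep
end
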